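/- arXiv:2312.14100 — 8 statements merged into one kernel-verified Lean document; each statement's English description precedes it below -/
import Mathlib

section
/- Let μ be a Γ-invariant probability measure on a Γ-invariant set Δ of quasimorphisms ψ with ‖ψ - φ₀‖_∞ ≤ D(φ₀), where the Γ-action is (γ.ψ)(γ') = ψ(γ'γ) - ψ(γ). Then ψ_μ(γ) := ∫_Δ ψ(γ) dμ(ψ) defines a group homomorphism ψ_μ : Γ → ℝ with ‖ψ_μ - φ₀‖_∞ ≤ D(φ₀). In particular, φ₀ is at bounded distance from a homomorphism. -/
open MeasureTheory

/-- Averaging over a `Γ`-invariant probability measure supported on functions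
within `D(φ₀)` of `φ₀` (for the action `(γ.ψ)(γ') = ψ(γ'γ) - ψ(γ)`) produces a
homomorphism at distance at most `D(φ₀)` from `φ₀`. -/
theorem stmt4 {Γ : Type*} [Group Γ] [Countable Γ]
    (φ₀ : Γ → ℝ) (hφ₀e : φ₀ 1 = 0) (D : ℝ)
    (hD : ∀ g h : Γ, |φ₀ (g * h) - φ₀ g - φ₀ h| ≤ D)
    (act : Γ → (Γ → ℝ) → (Γ → ℝ))
    (hact : ∀ γ ψ γ', act γ ψ γ' = ψ (γ' * γ) - ψ γ)
    (μ : Measure (Γ → ℝ)) [IsProbabilityMeasure μ]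
    (hsupp : ∀ᵐ ψ ∂μ, ψ 1 = 0 ∧ ∀ γ, |ψ γ - φ₀ γ| ≤ D)
    (hinv : ∀ γ : Γ, Measure.map (act γ) μ = μ)
    (ψμ : Γ → ℝ) (hψμ : ∀ γ, ψμ γ = ∫ ψ, ψ γ ∂μ) :
    (∀ γ₁ γ₂ : Γ, ψμ (γ₁ * γ₂) = ψμ γ₁ + ψμ γ₂) ∧
    (∀ γ, |ψμ γ - φ₀ γ| ≤ D) ∧
    (∃ (h : Γ → ℝ), (∀ a b, h (a * b) = h a + h b) ∧ ∃ C : ℝ, ∀ γ, |φ₀ γ - h γ| ≤ C) := by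
  have meas_eval : ∀ γ : Γ, Measurable (fun ψ : Γ → ℝ => ψ γ) :=
    fun γ => measurable_pi_apply γ
  have meas_act : ∀ γ : Γ, Measurable (act γ) := by
    intro γ
    have : act γ = fun ψ : Γ → ℝ => fun γ' => ψ (γ' * γ) - ψ γ := by
      funext ψ γ'; exact hact γ ψ γ'
    rw [this]
    exact measurable_pi_lambda _ fun γ' =>
      (measurable_pi_apply (γ' * γ)).sub (measurable_pi_apply γ)
  have integ : ∀ γ : Γ, Integrable (fun ψ : Γ → ℝ => ψ γ) μ := by
    intro γ
    refine (integrable_const (D + |φ₀ γ|)).mono' (meas_eval γ).aestronglyMeasurable ?_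
    filter_upwards [hsupp] with ψ hψ
    have := hψ.2 γ
    have : |ψ γ| ≤ D + |φ₀ γ| := by
      calc |ψ γ| = |(ψ γ - φ₀ γ) + φ₀ γ| := by ring_nf
        _ ≤ |ψ γ - φ₀ γ| + |φ₀ γ| := abs_add_le _ _
        _ ≤ D + |φ₀ γ| := by linarith
    simpa using this
  have hom : ∀ γ₁ γ₂ : Γ, ψμ (γ₁ * γ₂) = ψμ γ₁ + ψμ γ₂ := by
    intro γ₁ γ₂
    have h1 : (∫ ψ : Γ → ℝ, (ψ (γ₁ * γ₂) - ψ γ₂) ∂μ) = ψμ γ₁ := by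
      have heq : (fun ψ : Γ → ℝ => ψ (γ₁ * γ₂) - ψ γ₂)
          = fun ψ => (act γ₂ ψ) γ₁ := by
        funext ψ; rw [hact]
      rw [heq, hψμ]
      calc (∫ ψ : Γ → ℝ, (act γ₂ ψ) γ₁ ∂μ)
          = ∫ ψ : Γ → ℝ, ψ γ₁ ∂(Measure.map (act γ₂) μ) := by
            rw [integral_map (meas_act γ₂).aemeasurable
              (meas_eval γ₁).aestronglyMeasurable]
        _ = ∫ ψ : Γ → ℝ, ψ γ₁ ∂μ := by rw [hinv γ₂]
    have h2 : ψμ (γ₁ * γ₂) = (∫ ψ : Γ → ℝ, (ψ (γ₁ * γ₂) - ψ γ₂) ∂μ) + ψμ γ₂ := by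
      have := integral_sub (integ (γ₁*γ₂)) (integ γ₂)
      rw [hψμ (γ₁ * γ₂), hψμ γ₂]
      rw [this]; ring
    rw [h2, h1]
  have bnd : ∀ γ, |ψμ γ - φ₀ γ| ≤ D := by
    intro γ
    have hμ : (μ Set.univ).toReal = 1 := by simp
    have heq : ψμ γ - φ₀ γ = ∫ ψ : Γ → ℝ, (ψ γ - φ₀ γ) ∂μ := by
      rw [hψμ γ, integral_sub (integ γ) (integrable_const _), integral_const]
      simp
    rw [heq, ← Real.norm_eq_abs]
    calc ‖∫ ψ : Γ → ℝ, (ψ γ - φ₀ γ) ∂μ‖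
        ≤ D * (μ Set.univ).toReal := by
          refine norm_integral_le_of_norm_le_const ?_
          filter_upwards [hsupp] with ψ hψ
          simpa using hψ.2 γ
      _ = D := by rw [hμ, mul_one]
  exact ⟨hom, bnd, ψμ, hom, D, fun γ => by rw [abs_sub_comm]; exact bnd γ⟩
end

section
/- If φ₀ : Γ → ℝ is a quasimorphism with φ₀(e)=0 which is not at bounded distance from any homomorphism, then the orbit closure Δ_{φ₀} of φ₀ (under the action (γ.φ)(γ') = φ(γ'γ) - φ(γ), in the product topology on ℝ^Γ) does not admit a Γ-invariant Borel probability measure. -/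
open MeasureTheory

/-!
The barycentre `h a := ∫ ψ a ∂μ` of an invariant probability measure on the orbit closure is a
homomorphism: invariance under `γ` turns `ψ a` into `ψ (a * γ) - ψ γ`. Every function in the
orbit closure is within the defect `D` of `φ₀` pointwise, so `h` is too, contradicting the
assumption that `φ₀` is at unbounded distance from every homomorphism.
-/

def shiftAct {Γ : Type*} [Mul Γ] (γ : Γ) (ψ : Γ → ℝ) : Γ → ℝ :=
  fun γ' => ψ (γ' * γ) - ψ γ

theorem measurable_shiftAct {Γ : Type*} [Mul Γ] (γ : Γ) : Measurable (shiftAct γ) :=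
  measurable_pi_lambda _ fun a => (measurable_pi_apply (a * γ)).sub (measurable_pi_apply γ)

theorem isClosed_setOf_forall_abs_sub_le {ι : Type*} (φ : ι → ℝ) (D : ℝ) :
    IsClosed {ψ : ι → ℝ | ∀ a, |ψ a - φ a| ≤ D} := by
  simp only [Set.ofPred_forall]
  exact isClosed_iInter fun a =>
    isClosed_le ((continuous_apply a).sub continuous_const).abs continuous_const

theorem closure_orbit_subset_abs_sub_le {Γ : Type*} [Mul Γ] {φ : Γ → ℝ} {D : ℝ}
    (hD : ∀ g h, |φ (g * h) - φ g - φ h| ≤ D) :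
    closure {ψ | ∃ γ, ψ = shiftAct γ φ} ⊆ {ψ | ∀ a, |ψ a - φ a| ≤ D} := by
  refine closure_minimal ?_ (isClosed_setOf_forall_abs_sub_le φ D)
  rintro _ ⟨γ, rfl⟩ a
  calc |shiftAct γ φ a - φ a| = |φ (a * γ) - φ a - φ γ| := by
        rw [shiftAct, sub_right_comm]
    _ ≤ D := hD a γ

section Barycentre

variable {ι : Type*} {μ : Measure (ι → ℝ)} {φ : ι → ℝ} {D : ℝ}

theorem integrable_eval_of_ae_abs_sub_le [IsFiniteMeasure μ]
    (hμ : ∀ᵐ ψ ∂μ, ∀ a, |ψ a - φ a| ≤ D) (a : ι) : Integrable (fun ψ : ι → ℝ => ψ a) μ := by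
  refine (integrable_const (|φ a| + D)).mono' (measurable_pi_apply a).aestronglyMeasurable ?_
  filter_upwards [hμ] with ψ hψ
  calc ‖ψ a‖ = |φ a + (ψ a - φ a)| := by rw [Real.norm_eq_abs, add_sub_cancel]
    _ ≤ |φ a| + |ψ a - φ a| := abs_add_le _ _
    _ ≤ |φ a| + D := by gcongr; exact hψ a

theorem abs_sub_integral_eval_le [IsProbabilityMeasure μ]
    (hμ : ∀ᵐ ψ ∂μ, ∀ a, |ψ a - φ a| ≤ D) (a : ι) : |φ a - ∫ ψ, ψ a ∂μ| ≤ D := by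
  have hsub : φ a - ∫ ψ, ψ a ∂μ = ∫ ψ, (φ a - ψ a) ∂μ := by
    rw [integral_sub (integrable_const _) (integrable_eval_of_ae_abs_sub_le hμ a),
      integral_const (μ := μ), probReal_univ, one_smul]
  have hbound : ∀ᵐ ψ ∂μ, ‖φ a - ψ a‖ ≤ D := by
    filter_upwards [hμ] with ψ hψ
    rw [Real.norm_eq_abs, abs_sub_comm]
    exact hψ a
  simpa [hsub] using norm_integral_le_of_norm_le_const hbound

end Barycentre

theorem integral_eval_mul_of_map_shiftAct_eq {Γ : Type*} [Mul Γ] {μ : Measure (Γ → ℝ)}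
    (hint : ∀ a, Integrable (fun ψ : Γ → ℝ => ψ a) μ) (hinv : ∀ γ, μ.map (shiftAct γ) = μ)
    (a b : Γ) : ∫ ψ, ψ (a * b) ∂μ = (∫ ψ, ψ a ∂μ) + ∫ ψ, ψ b ∂μ := by
  have hshift : ∫ ψ, ψ a ∂μ = ∫ ψ, shiftAct b ψ a ∂μ := by
    conv_lhs => rw [← hinv b]
    exact integral_map (measurable_shiftAct b).aemeasurable
      (measurable_pi_apply a).aestronglyMeasurable
  rw [hshift]
  simp only [shiftAct]
  rw [integral_sub (hint (a * b)) (hint b), sub_add_cancel]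

theorem stmt5_general {Γ : Type*} [Group Γ]
    (φ₀ : Γ → ℝ)
    (hqm : ∃ D : ℝ, ∀ g h : Γ, |φ₀ (g * h) - φ₀ g - φ₀ h| ≤ D)
    (hnontriv : ¬ ∃ (h : Γ → ℝ), (∀ a b, h (a * b) = h a + h b) ∧
      ∃ C : ℝ, ∀ γ, |φ₀ γ - h γ| ≤ C)
    (act : Γ → (Γ → ℝ) → (Γ → ℝ))
    (hact : ∀ γ ψ γ', act γ ψ γ' = ψ (γ' * γ) - ψ γ) :
    ¬ ∃ μ : Measure (Γ → ℝ), IsProbabilityMeasure μ ∧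
        (∀ᵐ ψ ∂μ, ψ ∈ closure {ψ' : Γ → ℝ | ∃ γ : Γ, ψ' = act γ φ₀}) ∧
        (∀ γ : Γ, Measure.map (act γ) μ = μ) := by
  rintro ⟨μ, hprob, hsupp, hinv⟩
  obtain ⟨D, hD⟩ := hqm
  obtain rfl : act = shiftAct := funext₂ fun γ ψ => funext (hact γ ψ)
  have hμ : ∀ᵐ ψ ∂μ, ∀ a, |ψ a - φ₀ a| ≤ D :=
    hsupp.mono fun ψ hψ => closure_orbit_subset_abs_sub_le hD hψ
  exact hnontriv ⟨fun a => ∫ ψ, ψ a ∂μ,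
    integral_eval_mul_of_map_shiftAct_eq (integrable_eval_of_ae_abs_sub_le hμ) hinv,
    D, abs_sub_integral_eval_le hμ⟩

/-- If the quasimorphism `φ₀` (with `φ₀(e) = 0`) is not at bounded distance
from a homomorphism, then the orbit closure `Δ_{φ₀}` of `φ₀` under the action
`(γ.φ)(γ') = φ(γ'γ) - φ(γ)` (product topology on `ℝ^Γ`) carries no
`Γ`-invariant Borel probability measure. -/
theorem stmt5 {Γ : Type*} [Group Γ] [Countable Γ]
    (φ₀ : Γ → ℝ) (hφ₀e : φ₀ 1 = 0)
    (hqm : ∃ D : ℝ, ∀ g h : Γ, |φ₀ (g * h) - φ₀ g - φ₀ h| ≤ D)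
    (hnontriv : ¬ ∃ (h : Γ → ℝ), (∀ a b, h (a * b) = h a + h b) ∧
      ∃ C : ℝ, ∀ γ, |φ₀ γ - h γ| ≤ C)
    (act : Γ → (Γ → ℝ) → (Γ → ℝ))
    (hact : ∀ γ ψ γ', act γ ψ γ' = ψ (γ' * γ) - ψ γ) :
    ¬ ∃ μ : Measure (Γ → ℝ), IsProbabilityMeasure μ ∧
        (∀ᵐ ψ ∂μ, ψ ∈ closure {ψ' : Γ → ℝ | ∃ γ : Γ, ψ' = act γ φ₀}) ∧
        (∀ γ : Γ, Measure.map (act γ) μ = μ) :=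
  stmt5_general φ₀ hqm hnontriv act hact
end

section
/- For a quasimorphism φ₀ : Γ → ℝ with φ₀(e) = 0, the orbit closure Δ_{φ₀} ⊆ 𝓕₀(Γ) is compact (in the product topology) and every element of Δ_{φ₀} is a quasimorphism at distance at most D(φ₀) from φ₀. -/
/-- The orbit closure `Δ_{φ₀}` of a normalized quasimorphism `φ₀` under the
action `(γ.φ)(γ') = φ(γ'γ) - φ(γ)` is compact in the product topology, and
every element of it is a quasimorphism at distance at most `D(φ₀)` from `φ₀`. -/
theorem stmt6 {Γ : Type*} [Group Γ] [Countable Γ]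
    (φ₀ : Γ → ℝ) (hφ₀e : φ₀ 1 = 0) (D : ℝ) (hD0 : 0 ≤ D)
    (hD : ∀ g h : Γ, |φ₀ (g * h) - φ₀ g - φ₀ h| ≤ D)
    (act : Γ → (Γ → ℝ) → (Γ → ℝ))
    (hact : ∀ γ ψ γ', act γ ψ γ' = ψ (γ' * γ) - ψ γ) :
    IsCompact (closure {ψ : Γ → ℝ | ∃ γ : Γ, ψ = act γ φ₀}) ∧
    (∀ ψ ∈ closure {ψ : Γ → ℝ | ∃ γ : Γ, ψ = act γ φ₀},
      (∀ γ, |ψ γ - φ₀ γ| ≤ D) ∧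
      ∃ D' : ℝ, ∀ g h : Γ, |ψ (g * h) - ψ g - ψ h| ≤ D') := by
  set S : Set (Γ → ℝ) := Set.pi Set.univ (fun γ => Metric.closedBall (φ₀ γ) D) with hS
  have hScompact : IsCompact S := isCompact_univ_pi fun γ => isCompact_closedBall _ _
  have hSclosed : IsClosed S :=
    isClosed_set_pi fun γ _ => Metric.isClosed_closedBall
  have horb : {ψ : Γ → ℝ | ∃ γ : Γ, ψ = act γ φ₀} ⊆ S := by
    rintro ψ ⟨γ, rfl⟩ γ' -
    have := hD γ' γ
    simp only [Metric.mem_closedBall, Real.dist_eq, hact]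
    calc |φ₀ (γ' * γ) - φ₀ γ - φ₀ γ'| = |φ₀ (γ' * γ) - φ₀ γ' - φ₀ γ| := by ring_nf
    _ ≤ D := hD γ' γ
  have hclS : closure {ψ : Γ → ℝ | ∃ γ : Γ, ψ = act γ φ₀} ⊆ S :=
    closure_minimal horb hSclosed
  refine ⟨hScompact.of_isClosed_subset isClosed_closure hclS, fun ψ hψ => ?_⟩
  have hmem : ∀ γ, |ψ γ - φ₀ γ| ≤ D := by
    intro γ
    have := hclS hψ γ (Set.mem_univ γ)
    simpa [Real.dist_eq] using this
  refine ⟨hmem, 4 * D, fun g h => ?_⟩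
  have h1 := hmem (g * h)
  have h2 := hmem g
  have h3 := hmem h
  have h4 := hD g h
  calc |ψ (g * h) - ψ g - ψ h|
      = |(ψ (g * h) - φ₀ (g * h)) - (ψ g - φ₀ g) - (ψ h - φ₀ h)
        + (φ₀ (g * h) - φ₀ g - φ₀ h)| := by ring_nf
    _ ≤ |ψ (g * h) - φ₀ (g * h)| + |ψ g - φ₀ g| + |ψ h - φ₀ h|
        + |φ₀ (g * h) - φ₀ g - φ₀ h| := by
          apply (abs_add_le _ _).trans
          gcongr
          apply (abs_sub _ _).trans
          gcongr
          exact abs_sub _ _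
    _ ≤ D + D + D + D := by gcongr
    _ = 4 * D := by ring
end

section
/- Let p be a symmetric finitely supported probability measure on a countable group Γ, φ₀ a quasimorphism with φ₀(e)=0, and ν a p-stationary probability measure on the orbit closure Δ_{φ₀} (i.e. ∑_γ p(γ) (γ_*ν) = ν). Define ψ_ν(γ) = ∫_{Δ_{φ₀}} φ(γ) dν(φ). Then ψ_ν is right-p-harmonic: ψ_ν * p = ψ_ν, i.e. ∑_{γ'} p(γ') ψ_ν(γγ') = ψ_ν(γ) for all γ, and ‖ψ_ν - φ₀‖_∞ ≤ D(φ₀). -/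
open MeasureTheory

section AuxStmt8

variable {Γ : Type*} [Group Γ]

/-- Right averaging operator. -/
def stmt8Pop (F : Finset Γ) (p : Γ → ℝ) (g : Γ → ℝ) : Γ → ℝ :=
  fun γ => ∑ x ∈ F, p x * g (γ * x)

/-- Left averaging operator. -/
def stmt8Qop (F : Finset Γ) (p : Γ → ℝ) (g : Γ → ℝ) : Γ → ℝ :=
  fun γ => ∑ x ∈ F, p x * g (x * γ)

lemma stmt8_PQ_comm (F : Finset Γ) (p : Γ → ℝ) (g : Γ → ℝ) :
    stmt8Pop F p (stmt8Qop F p g) = stmt8Qop F p (stmt8Pop F p g) := by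
  funext γ
  simp only [stmt8Pop, stmt8Qop, Finset.mul_sum]
  rw [Finset.sum_comm]
  refine Finset.sum_congr rfl fun y _ => Finset.sum_congr rfl fun x _ => ?_
  rw [← mul_assoc y γ x]
  ring

lemma stmt8_P_Qiter (F : Finset Γ) (p : Γ → ℝ) :
    ∀ (n : ℕ) (g : Γ → ℝ),
      stmt8Pop F p ((stmt8Qop F p)^[n] g) = (stmt8Qop F p)^[n] (stmt8Pop F p g) := by
  intro n
  induction n with
  | zero => intro g; rfl
  | succ n ih =>
    intro g
    rw [Function.iterate_succ_apply, Function.iterate_succ_apply,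
      ih (stmt8Qop F p g), stmt8_PQ_comm]

lemma stmt8_PQ_one (F : Finset Γ) (p : Γ → ℝ) (g : Γ → ℝ) :
    stmt8Pop F p g 1 = stmt8Qop F p g 1 := by
  simp [stmt8Pop, stmt8Qop]

lemma stmt8_Q_iter_one (F : Finset Γ) (p : Γ → ℝ) :
    ∀ (n : ℕ) (g : Γ → ℝ), (stmt8Qop F p)^[n] g 1 = (stmt8Pop F p)^[n] g 1 := by
  intro n
  induction n with
  | zero => intro g; rfl
  | succ n ih =>
    intro g
    rw [Function.iterate_succ_apply', ← stmt8_PQ_one, stmt8_P_Qiter,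
      ih (stmt8Pop F p g), ← Function.iterate_succ_apply]

lemma stmt8_P_iter_affine (F : Finset Γ) (p : Γ → ℝ) (hp1F : ∑ x ∈ F, p x = 1)
    (g : Γ → ℝ) (S : ℝ) (hg : ∀ γ, stmt8Pop F p g γ = g γ + S) :
    ∀ (n : ℕ) (γ : Γ), (stmt8Pop F p)^[n] g γ = g γ + n * S := by
  intro n
  induction n with
  | zero => intro γ; simp
  | succ n ih =>
    intro γ
    rw [Function.iterate_succ_apply']
    have : stmt8Pop F p ((stmt8Pop F p)^[n] g) γ
        = ∑ x ∈ F, p x * ((stmt8Pop F p)^[n] g (γ * x)) := rfl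
    rw [this]
    calc ∑ x ∈ F, p x * ((stmt8Pop F p)^[n] g (γ * x))
        = ∑ x ∈ F, (p x * g (γ * x) + p x * (n * S)) := by
          refine Finset.sum_congr rfl fun x _ => ?_
          rw [ih]; ring
      _ = (∑ x ∈ F, p x * g (γ * x)) + (∑ x ∈ F, p x) * (n * S) := by
          rw [Finset.sum_add_distrib, ← Finset.sum_mul]
      _ = (g γ + S) + n * S := by rw [hp1F, ← hg γ]; simp [stmt8Pop]
      _ = g γ + (n + 1 : ℕ) * S := by push_cast; ring

lemma stmt8_PQ_bound (F : Finset Γ) (p : Γ → ℝ) (hp0 : ∀ x, 0 ≤ p x)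
    (hp1F : ∑ x ∈ F, p x = 1)
    (hinv : ∀ g : Γ → ℝ, ∑ x ∈ F, p x * g x⁻¹ = ∑ x ∈ F, p x * g x)
    (g : Γ → ℝ) (B : ℝ) (hB : ∀ γ, |g γ + g γ⁻¹| ≤ B) :
    ∀ (n : ℕ) (γ : Γ), |(stmt8Pop F p)^[n] g γ + (stmt8Qop F p)^[n] g γ⁻¹| ≤ B := by
  intro n
  induction n with
  | zero => exact hB
  | succ n ih =>
    intro γ
    rw [Function.iterate_succ_apply', Function.iterate_succ_apply']
    have h1 : stmt8Qop F p ((stmt8Qop F p)^[n] g) γ⁻¹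
        = ∑ x ∈ F, p x * ((stmt8Qop F p)^[n] g ((γ * x)⁻¹)) := by
      have := hinv (fun y => (stmt8Qop F p)^[n] g (y * γ⁻¹))
      simp only [mul_inv_rev]
      exact this.symm
    have h2 : stmt8Pop F p ((stmt8Pop F p)^[n] g) γ
        = ∑ x ∈ F, p x * ((stmt8Pop F p)^[n] g (γ * x)) := rfl
    rw [h1, h2, ← Finset.sum_add_distrib]
    have h3 : ∀ x ∈ F,
        p x * ((stmt8Pop F p)^[n] g (γ * x)) + p x * ((stmt8Qop F p)^[n] g ((γ * x)⁻¹))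
        = p x * (((stmt8Pop F p)^[n] g (γ * x)) + ((stmt8Qop F p)^[n] g ((γ * x)⁻¹))) := by
      intro x _; ring
    rw [Finset.sum_congr rfl h3]
    calc |∑ x ∈ F, p x * (((stmt8Pop F p)^[n] g (γ * x)) + ((stmt8Qop F p)^[n] g ((γ * x)⁻¹)))|
        ≤ ∑ x ∈ F, |p x * (((stmt8Pop F p)^[n] g (γ * x)) + ((stmt8Qop F p)^[n] g ((γ * x)⁻¹)))| :=
          Finset.abs_sum_le_sum_abs _ _
      _ ≤ ∑ x ∈ F, p x * B := by
          refine Finset.sum_le_sum fun x _ => ?_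
          rw [abs_mul, abs_of_nonneg (hp0 x)]
          exact mul_le_mul_of_nonneg_left (ih (γ * x)) (hp0 x)
      _ = B := by rw [← Finset.sum_mul, hp1F, one_mul]

end AuxStmt8

/-- If `ν` is a `p`-stationary probability measure on the orbit closure of a
normalized quasimorphism `φ₀` (with `p` finitely supported and symmetric), then
`ψ_ν(γ) = ∫ φ(γ) dν(φ)` is right-`p`-harmonic and `‖ψ_ν - φ₀‖_∞ ≤ D(φ₀)`. -/
theorem stmt8 {Γ : Type*} [Group Γ] [Countable Γ]
    (p : Γ → ℝ) (hp0 : ∀ γ, 0 ≤ p γ) (hp1 : ∑' γ, p γ = 1)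
    (hpsymm : ∀ γ : Γ, p γ⁻¹ = p γ) (hpfin : (Function.support p).Finite)
    (hpgen : Subgroup.closure (Function.support p) = ⊤)
    (φ₀ : Γ → ℝ) (hφ₀e : φ₀ 1 = 0) (D : ℝ)
    (hD : ∀ g h : Γ, |φ₀ (g * h) - φ₀ g - φ₀ h| ≤ D)
    (act : Γ → (Γ → ℝ) → (Γ → ℝ))
    (hact : ∀ γ ψ γ', act γ ψ γ' = ψ (γ' * γ) - ψ γ)
    (ν : Measure (Γ → ℝ)) [IsProbabilityMeasure ν]
    (hsupp : ∀ᵐ ψ ∂ν, ψ ∈ closure {ψ' : Γ → ℝ | ∃ γ : Γ, ψ' = act γ φ₀})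
    (hstat : Measure.sum (fun γ : Γ => ENNReal.ofReal (p γ) • Measure.map (act γ) ν) = ν)
    (ψν : Γ → ℝ) (hψν : ∀ γ, ψν γ = ∫ φ, φ γ ∂ν) :
    (∀ γ : Γ, ∑' γ' : Γ, p γ' * ψν (γ * γ') = ψν γ) ∧
    (∀ γ : Γ, |ψν γ - φ₀ γ| ≤ D) := by
  -- basic measurability
  have hmeas_eval : ∀ γ : Γ, Measurable (fun ψ : Γ → ℝ => ψ γ) := measurable_pi_apply
  have hmeas_act : ∀ γ : Γ, Measurable (act γ) := by
    intro γ
    have : act γ = fun ψ : Γ → ℝ => fun γ' => ψ (γ' * γ) - ψ γ := by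
      funext ψ γ'; exact hact γ ψ γ'
    rw [this]
    exact measurable_pi_lambda _ fun γ' => (measurable_pi_apply _).sub (measurable_pi_apply _)
  -- closure bound
  have hCbound : ∀ ψ ∈ closure {ψ' : Γ → ℝ | ∃ γ : Γ, ψ' = act γ φ₀},
      ∀ γ : Γ, |ψ γ - φ₀ γ| ≤ D := by
    intro ψ hψ γ
    have hclosed : IsClosed {ψ' : Γ → ℝ | |ψ' γ - φ₀ γ| ≤ D} :=
      isClosed_le (((continuous_apply γ).sub continuous_const).abs) continuous_const
    have hsub : {ψ' : Γ → ℝ | ∃ γ' : Γ, ψ' = act γ' φ₀} ⊆ {ψ' : Γ → ℝ | |ψ' γ - φ₀ γ| ≤ D} := by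
      rintro ψ' ⟨γ', rfl⟩
      show |act γ' φ₀ γ - φ₀ γ| ≤ D
      rw [hact]
      have h := hD γ γ'
      have : φ₀ (γ * γ') - φ₀ γ' - φ₀ γ = φ₀ (γ * γ') - φ₀ γ - φ₀ γ' := by ring
      rw [this]; exact h
    exact closure_minimal hsub hclosed hψ
  -- integrability of evaluations
  have hint : ∀ γ : Γ, Integrable (fun ψ : Γ → ℝ => ψ γ) ν := by
    intro γ
    refine Integrable.mono' (integrable_const (|φ₀ γ| + D))
      (hmeas_eval γ).aestronglyMeasurable ?_
    filter_upwards [hsupp] with ψ hψ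
    have h := hCbound ψ hψ γ
    have h2 : |ψ γ| - |φ₀ γ| ≤ |ψ γ - φ₀ γ| := abs_sub_abs_le_abs_sub _ _
    rw [Real.norm_eq_abs]
    linarith
  -- Part 2
  have part2 : ∀ γ : Γ, |ψν γ - φ₀ γ| ≤ D := by
    intro γ
    have h1 : ψν γ - φ₀ γ = ∫ ψ, (ψ γ - φ₀ γ) ∂ν := by
      rw [hψν γ, integral_sub (hint γ) (integrable_const _), integral_const]
      simp
    rw [h1, ← Real.norm_eq_abs]
    have h2 : ‖∫ ψ, (ψ γ - φ₀ γ) ∂ν‖ ≤ D * (ν Set.univ).toReal := by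
      refine norm_integral_le_of_norm_le_const ?_
      filter_upwards [hsupp] with ψ hψ
      rw [Real.norm_eq_abs]
      exact hCbound ψ hψ γ
    simpa using h2
  refine ⟨?_, part2⟩
  -- stationarity identity
  have hkey : ∀ γ : Γ, ψν γ = ∑' γ' : Γ, p γ' * (ψν (γ * γ') - ψν γ') := by
    intro γ
    have hI : Integrable (fun ψ : Γ → ℝ => ψ γ)
        (Measure.sum fun γ' : Γ => ENNReal.ofReal (p γ') • Measure.map (act γ') ν) := by
      rw [hstat]; exact hint γ
    calc ψν γ = ∫ ψ, ψ γ ∂ν := hψν γ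
      _ = ∫ ψ, ψ γ ∂(Measure.sum fun γ' : Γ =>
            ENNReal.ofReal (p γ') • Measure.map (act γ') ν) := by rw [hstat]
      _ = ∑' γ' : Γ, ∫ ψ, ψ γ ∂(ENNReal.ofReal (p γ') • Measure.map (act γ') ν) :=
          integral_sum_measure hI
      _ = ∑' γ' : Γ, p γ' * (ψν (γ * γ') - ψν γ') := by
          refine tsum_congr fun γ' => ?_
          rw [integral_smul_measure, ENNReal.toReal_ofReal (hp0 γ'),
            integral_map (hmeas_act γ').aemeasurable (hmeas_eval γ).aestronglyMeasurable]
          have : (fun ψ : Γ → ℝ => act γ' ψ γ) = fun ψ : Γ → ℝ => ψ (γ * γ') - ψ γ' := by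
            funext ψ; exact hact γ' ψ γ
          rw [this, integral_sub (hint (γ * γ')) (hint γ'), ← hψν, ← hψν, smul_eq_mul]
  -- pass to finite sums
  set F := hpfin.toFinset with hF
  have hpoff : ∀ b : Γ, b ∉ F → p b = 0 := by
    intro b hb
    by_contra h
    exact hb (hpfin.mem_toFinset.mpr h)
  have htsum : ∀ g : Γ → ℝ, ∑' x : Γ, p x * g x = ∑ x ∈ F, p x * g x := by
    intro g
    refine tsum_eq_sum fun b hb => ?_
    rw [hpoff b hb, zero_mul]
  have hp1F : ∑ x ∈ F, p x = 1 := by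
    rw [← hp1]
    exact (tsum_eq_sum fun b hb => hpoff b hb).symm
  have hFinvmem : ∀ x : Γ, x ∈ F ↔ x⁻¹ ∈ F := by
    intro x
    simp only [hF, Set.Finite.mem_toFinset, Function.mem_support]
    rw [hpsymm x]
  have hinv : ∀ g : Γ → ℝ, ∑ x ∈ F, p x * g x⁻¹ = ∑ x ∈ F, p x * g x := by
    intro g
    refine Finset.sum_equiv (Equiv.inv Γ) (fun x => ?_) (fun x _ => ?_)
    · simpa using hFinvmem x
    · simp only [Equiv.inv_apply]
      rw [hpsymm]
  -- harmonic up to constant S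
  set S := ∑ x ∈ F, p x * ψν x with hS
  have hPf : ∀ γ : Γ, stmt8Pop F p ψν γ = ψν γ + S := by
    intro γ
    have h := hkey γ
    rw [htsum (fun γ' => ψν (γ * γ') - ψν γ')] at h
    have hsplit : ∑ x ∈ F, p x * (ψν (γ * x) - ψν x)
        = stmt8Pop F p ψν γ - S := by
      simp only [stmt8Pop, hS, mul_sub, Finset.sum_sub_distrib]
    rw [hsplit] at h
    linarith
  -- defect nonneg and 3D bound
  have hD0 : 0 ≤ D := le_trans (abs_nonneg (φ₀ (1 * 1) - φ₀ 1 - φ₀ 1)) (hD 1 1)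
  have hbound3 : ∀ γ : Γ, |ψν γ + ψν γ⁻¹| ≤ 3 * D := by
    intro γ
    have h1 := part2 γ
    have h2 := part2 γ⁻¹
    have h3 : |φ₀ γ + φ₀ γ⁻¹| ≤ D := by
      have h := hD γ γ⁻¹
      rw [mul_inv_cancel, hφ₀e] at h
      have heq0 : (0 : ℝ) - φ₀ γ - φ₀ γ⁻¹ = -(φ₀ γ + φ₀ γ⁻¹) := by ring
      rw [heq0, abs_neg] at h
      exact h
    have heq : ψν γ + ψν γ⁻¹
        = (ψν γ - φ₀ γ) + (ψν γ⁻¹ - φ₀ γ⁻¹) + (φ₀ γ + φ₀ γ⁻¹) := by ring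
    calc |ψν γ + ψν γ⁻¹|
        ≤ |ψν γ - φ₀ γ| + |ψν γ⁻¹ - φ₀ γ⁻¹| + |φ₀ γ + φ₀ γ⁻¹| := by
          rw [heq]; exact abs_add_three _ _ _
      _ ≤ 3 * D := by linarith
  -- iterate bound forces S = 0
  have hSkey : ∀ n : ℕ, |2 * ψν 1 + 2 * (n * S)| ≤ 3 * D := by
    intro n
    have hP := stmt8_P_iter_affine F p hp1F ψν S hPf n 1
    have hQ := stmt8_Q_iter_one F p n ψν
    have hb := stmt8_PQ_bound F p hp0 hp1F hinv ψν (3 * D) hbound3 n 1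
    rw [inv_one, hQ, hP] at hb
    have : ψν 1 + (n : ℝ) * S + (ψν 1 + (n : ℝ) * S) = 2 * ψν 1 + 2 * ((n : ℝ) * S) := by
      ring
    rwa [this] at hb
  have hS0 : S = 0 := by
    by_contra hSne
    have hSpos : 0 < |S| := abs_pos.mpr hSne
    obtain ⟨n, hn⟩ := exists_nat_gt ((3 * D + |2 * ψν 1|) / (2 * |S|))
    have hn2 : 3 * D + |2 * ψν 1| < n * (2 * |S|) := by
      rwa [div_lt_iff₀ (by linarith)] at hn
    have hb := hSkey n
    have habs : |2 * ((n : ℝ) * S)| ≤ |2 * ψν 1 + 2 * ((n : ℝ) * S)| + |2 * ψν 1| := by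
      have := abs_add_le (2 * ψν 1 + 2 * ((n : ℝ) * S)) (-(2 * ψν 1))
      simpa using this
    have habs2 : |2 * ((n : ℝ) * S)| = (n : ℝ) * (2 * |S|) := by
      rw [abs_mul, abs_mul, abs_two, Nat.abs_cast]
      ring
    rw [habs2] at habs
    linarith
  -- conclude harmonicity
  intro γ
  rw [htsum (fun γ' => ψν (γ * γ'))]
  have h := hPf γ
  rw [hS0, add_zero] at h
  exact h
end

section
/- In the setting above, the sequence ℓ_ν(n) := ∑_γ p^{*n}(γ) ∫_{Δ_{φ₀}} φ(γ) dν(φ) is additive: ℓ_ν(m+n) = ℓ_ν(m) + ℓ_ν(n) for all m, n ≥ 1, hence ℓ_ν(n) = n·ℓ_ν(1); moreover the sequence (ℓ_ν(n)) is bounded, so ℓ_ν(1) = 0. -/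
open MeasureTheory Classical

/-- Convolution of two functions on a countable group. -/
noncomputable def conv {Γ : Type*} [Group Γ] (p q : Γ → ℝ) : Γ → ℝ :=
  fun γ => ∑' a : Γ, p a * q (a⁻¹ * γ)

/-- `n`-fold convolution power of `p` (with `p^{*0} = δ_e`). -/
noncomputable def convPow {Γ : Type*} [Group Γ] (p : Γ → ℝ) : ℕ → Γ → ℝ
  | 0 => fun γ => if γ = 1 then 1 else 0
  | n + 1 => conv p (convPow p n)

private lemma summable_fin {α : Type*} {f : α → ℝ} (h : (Function.support f).Finite) :
    Summable f := by
  refine summable_of_ne_finset_zero (s := h.toFinset) ?_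
  intro b hb
  by_contra hb'
  exact hb (h.mem_toFinset.mpr hb')

private lemma tsum_tsum_comm {α β : Type*} {f : α → β → ℝ}
    (hf : (Function.support fun q : α × β => f q.1 q.2).Finite) :
    ∑' a, ∑' b, f a b = ∑' b, ∑' a, f a b := by
  have h1 : ∀ a, Summable (f a) := by
    intro a
    refine summable_fin (Set.Finite.subset (hf.image Prod.snd) ?_)
    intro b hb
    exact ⟨(a, b), hb, rfl⟩
  have h2 : ∀ b, Summable fun a => f a b := by
    intro b
    refine summable_fin (Set.Finite.subset (hf.image Prod.fst) ?_)
    intro a ha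
    exact ⟨(a, b), ha, rfl⟩
  exact (Summable.tsum_comm' (summable_fin hf) h1 h2).symm


section convs
variable {Γ : Type*} [Group Γ] {p : Γ → ℝ}

private lemma fin_pair {p q : Γ → ℝ}
    (hp : (Function.support p).Finite) (hq : (Function.support q).Finite)
    (g : Γ → Γ → ℝ) (hg : ∀ γ a, g γ a ≠ 0 → p a ≠ 0 ∧ q (a⁻¹ * γ) ≠ 0) :
    (Function.support fun z : Γ × Γ => g z.1 z.2).Finite := by
  refine Set.Finite.subset ((hp.prod hq).image fun w : Γ × Γ => (w.1 * w.2, w.1)) ?_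
  intro z hz
  obtain ⟨h1, h2⟩ := hg z.1 z.2 hz
  exact ⟨(z.2, z.2⁻¹ * z.1), ⟨h1, h2⟩, by simp⟩

private lemma convPow_one : convPow p 1 = p := by
  funext γ
  show ∑' a : Γ, p a * (if a⁻¹ * γ = 1 then 1 else 0) = p γ
  rw [tsum_eq_single γ ?_]
  · simp
  · intro b hb
    rw [if_neg, mul_zero]
    simp only [inv_mul_eq_one]
    exact hb

private lemma convPow_supp (hpfin : (Function.support p).Finite) :
    ∀ n : ℕ, (Function.support (convPow p n)).Finite := by
  intro n
  induction n with
  | zero =>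
    refine Set.Finite.subset (Set.finite_singleton (1 : Γ)) ?_
    intro γ hγ
    simp only [Function.mem_support, convPow] at hγ
    by_contra h
    exact hγ (if_neg h)
  | succ n ih =>
    refine Set.Finite.subset ((hpfin.prod ih).image fun w : Γ × Γ => w.1 * w.2) ?_
    intro γ hγ
    simp only [Function.mem_support, convPow, conv] at hγ
    have hex : ∃ a, p a * convPow p n (a⁻¹ * γ) ≠ 0 := by
      by_contra h
      push_neg at h
      exact hγ (by rw [tsum_eq_single (1 : Γ) (fun b _ => h b)]; exact h 1)
    obtain ⟨a, ha⟩ := hex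
    have h1 : p a ≠ 0 := fun h => ha (by simp [h])
    have h2 : convPow p n (a⁻¹ * γ) ≠ 0 := fun h => ha (by simp [h])
    exact ⟨(a, a⁻¹ * γ), ⟨h1, h2⟩, by simp⟩

private lemma convPow_nonneg (hp0 : ∀ γ, 0 ≤ p γ) : ∀ n γ, 0 ≤ convPow p n γ := by
  intro n
  induction n with
  | zero => intro γ; simp only [convPow]; split <;> norm_num
  | succ n ih =>
    intro γ
    exact tsum_nonneg fun a => mul_nonneg (hp0 a) (ih _)

private lemma convPow_mass (hpfin : (Function.support p).Finite) (hp1 : ∑' γ, p γ = 1) :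
    ∀ n : ℕ, ∑' γ, convPow p n γ = 1 := by
  intro n
  induction n with
  | zero =>
    show ∑' γ : Γ, (if γ = 1 then (1:ℝ) else 0) = 1
    rw [tsum_eq_single (1 : Γ) (fun b hb => if_neg hb)]
    simp
  | succ n ih =>
    have hfin2 : (Function.support fun z : Γ × Γ =>
        (fun γ a => p a * convPow p n (a⁻¹ * γ)) z.1 z.2).Finite := by
      refine fin_pair hpfin (convPow_supp hpfin n)
        (fun γ a => p a * convPow p n (a⁻¹ * γ)) fun γ a h => ?_
      exact ⟨fun h' => h (by simp [h']), fun h' => h (by simp [h'])⟩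
    show ∑' γ, ∑' a, p a * convPow p n (a⁻¹ * γ) = 1
    rw [tsum_tsum_comm hfin2]
    have hi : ∀ a : Γ, ∑' γ, p a * convPow p n (a⁻¹ * γ) = p a := by
      intro a
      rw [tsum_mul_left]
      have h := ((Equiv.mulLeft a).tsum_eq fun γ => convPow p n (a⁻¹ * γ))
      simp only [Equiv.coe_mulLeft, inv_mul_cancel_left] at h
      rw [← h, ih, mul_one]
    rw [tsum_congr hi, hp1]

private lemma conv_comm_pow (hpfin : (Function.support p).Finite) :
    ∀ n (γ : Γ), ∑' a, convPow p n a * p (a⁻¹ * γ) = convPow p (n + 1) γ := by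
  intro n
  induction n with
  | zero =>
    intro γ
    have h1 : convPow p (0 + 1) = p := convPow_one
    rw [h1, tsum_eq_single (1 : Γ) ?_]
    · simp [convPow]
    · intro b hb
      have hz : convPow p 0 b = 0 := if_neg hb
      rw [hz, zero_mul]
  | succ n ih =>
    intro γ
    show ∑' a, (∑' b, p b * convPow p n (b⁻¹ * a)) * p (a⁻¹ * γ) = _
    have step1 : ∀ a : Γ, (∑' b, p b * convPow p n (b⁻¹ * a)) * p (a⁻¹ * γ)
        = ∑' b, p b * convPow p n (b⁻¹ * a) * p (a⁻¹ * γ) := fun a => tsum_mul_right.symm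
    rw [tsum_congr step1]
    have hfin2 : (Function.support fun z : Γ × Γ =>
        (fun a b => p b * convPow p n (b⁻¹ * a) * p (a⁻¹ * γ)) z.1 z.2).Finite := by
      refine fin_pair hpfin (convPow_supp hpfin n)
        (q := convPow p n) (fun a b => p b * convPow p n (b⁻¹ * a) * p (a⁻¹ * γ)) fun a b h => ?_
      refine ⟨fun h' => h ?_, fun h' => h ?_⟩ <;> simp [h']
    rw [tsum_tsum_comm hfin2]
    have inner : ∀ b : Γ, ∑' a, p b * convPow p n (b⁻¹ * a) * p (a⁻¹ * γ)
        = p b * convPow p (n + 1) (b⁻¹ * γ) := by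
      intro b
      have e1 : ∀ a : Γ, p b * convPow p n (b⁻¹ * a) * p (a⁻¹ * γ)
          = p b * (convPow p n (b⁻¹ * a) * p (a⁻¹ * γ)) := fun a => mul_assoc _ _ _
      rw [tsum_congr e1, tsum_mul_left]
      congr 1
      have h := ((Equiv.mulLeft b).tsum_eq fun a => convPow p n (b⁻¹ * a) * p (a⁻¹ * γ))
      simp only [Equiv.coe_mulLeft, inv_mul_cancel_left, mul_inv_rev] at h
      rw [← h, ← ih (b⁻¹ * γ)]
      refine tsum_congr fun c => ?_
      rw [mul_assoc]
    rw [tsum_congr inner]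
    rfl

private lemma convPow_symm (hpfin : (Function.support p).Finite)
    (hpsymm : ∀ γ : Γ, p γ⁻¹ = p γ) :
    ∀ n (γ : Γ), convPow p n γ⁻¹ = convPow p n γ := by
  intro n
  induction n with
  | zero => intro γ; simp [convPow, inv_eq_one]
  | succ n ih =>
    intro γ
    show ∑' a, p a * convPow p n (a⁻¹ * γ⁻¹) = _
    have e1 : ∀ a : Γ, p a * convPow p n (a⁻¹ * γ⁻¹) = p a * convPow p n (γ * a) := by
      intro a
      rw [← mul_inv_rev, ih]
    rw [tsum_congr e1]
    rw [← (Equiv.inv Γ).tsum_eq fun a => p a * convPow p n (γ * a)]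
    simp only [Equiv.inv_apply, hpsymm]
    rw [← (((Equiv.inv Γ).trans (Equiv.mulRight γ)).tsum_eq
      fun a => p a * convPow p n (γ * a⁻¹))]
    simp only [Equiv.trans_apply, Equiv.inv_apply, Equiv.coe_mulRight, mul_inv_rev, inv_inv]
    rw [← conv_comm_pow hpfin n γ]
    refine tsum_congr fun b => ?_
    rw [mul_comm]
    congr 2
    group

end convs

section aux
private noncomputable def Fv {Γ : Type*} (ν : Measure (Γ → ℝ)) (γ : Γ) : ℝ := ∫ φ, φ γ ∂ν
end aux

/-- For a `p`-stationary probability measure `ν` on the orbit closure of a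
normalized quasimorphism, the sequence `ℓ_ν(n) = ∑_γ p^{*n}(γ) ∫ φ(γ) dν(φ)`
is additive, hence `ℓ_ν(n) = n ℓ_ν(1)`; it is bounded, and so `ℓ_ν(1) = 0`. -/
theorem stmt9 {Γ : Type*} [Group Γ] [Countable Γ]
    (p : Γ → ℝ) (hp0 : ∀ γ, 0 ≤ p γ) (hp1 : ∑' γ, p γ = 1)
    (hpsymm : ∀ γ : Γ, p γ⁻¹ = p γ) (hpfin : (Function.support p).Finite)
    (hpgen : Subgroup.closure (Function.support p) = ⊤)
    (φ₀ : Γ → ℝ) (hφ₀e : φ₀ 1 = 0) (D : ℝ)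
    (hD : ∀ g h : Γ, |φ₀ (g * h) - φ₀ g - φ₀ h| ≤ D)
    (act : Γ → (Γ → ℝ) → (Γ → ℝ))
    (hact : ∀ γ ψ γ', act γ ψ γ' = ψ (γ' * γ) - ψ γ)
    (ν : Measure (Γ → ℝ)) [IsProbabilityMeasure ν]
    (hsupp : ∀ᵐ ψ ∂ν, ψ ∈ closure {ψ' : Γ → ℝ | ∃ γ : Γ, ψ' = act γ φ₀})
    (hstat : Measure.sum (fun γ : Γ => ENNReal.ofReal (p γ) • Measure.map (act γ) ν) = ν)
    (ℓ : ℕ → ℝ) (hℓ : ∀ n, ℓ n = ∑' γ : Γ, convPow p n γ * ∫ φ, φ γ ∂ν) :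
    (∀ m n : ℕ, 1 ≤ m → 1 ≤ n → ℓ (m + n) = ℓ m + ℓ n) ∧
    (∀ n : ℕ, 1 ≤ n → ℓ n = n * ℓ 1) ∧
    (∃ M : ℝ, ∀ n : ℕ, 1 ≤ n → |ℓ n| ≤ M) ∧
    ℓ 1 = 0 := by
  have hFveq : ∀ γ : Γ, (∫ φ, φ γ ∂ν) = Fv ν γ := fun γ => rfl
  have hℓF : ∀ n, ℓ n = ∑' γ : Γ, convPow p n γ * Fv ν γ :=
    fun n => (hℓ n).trans (tsum_congr fun γ => by rw [hFveq])
  -- basic facts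
  have hD0 : 0 ≤ D := by
    have h := hD 1 1
    rw [one_mul, hφ₀e] at h
    simpa using h
  have horb : ∀ T : Set (Γ → ℝ), IsClosed T → (∀ γ₀ : Γ, act γ₀ φ₀ ∈ T) →
      ∀ᵐ ψ ∂ν, ψ ∈ T := by
    intro T hT hO
    filter_upwards [hsupp] with ψ hψ
    exact closure_minimal (by rintro _ ⟨γ₀, rfl⟩; exact hO γ₀) hT hψ
  have hbound : ∀ γ : Γ, ∀ᵐ ψ ∂ν, |ψ γ| ≤ D + |φ₀ γ| := by
    intro γ
    refine horb _ (isClosed_le (continuous_apply γ).abs continuous_const) fun γ₀ => ?_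
    show |act γ₀ φ₀ γ| ≤ D + |φ₀ γ|
    rw [hact]
    obtain ⟨h1, h2⟩ := abs_le.mp (hD γ γ₀)
    rw [abs_le]
    constructor <;> [linarith [neg_abs_le (φ₀ γ)]; linarith [le_abs_self (φ₀ γ)]]
  have hmeas : ∀ γ : Γ, Measurable fun ψ : Γ → ℝ => ψ γ := fun γ => measurable_pi_apply γ
  have hint : ∀ γ : Γ, Integrable (fun ψ => ψ γ) ν := by
    intro γ
    refine (integrable_const (D + |φ₀ γ|)).mono' (hmeas γ).aestronglyMeasurable ?_
    filter_upwards [hbound γ] with ψ h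
    rwa [Real.norm_eq_abs]
  have hF1 : Fv ν 1 = 0 := by
    have hz : ∀ᵐ ψ ∂ν, ψ 1 = 0 := by
      refine horb {ψ | ψ 1 = 0}
        (isClosed_eq (continuous_apply 1) continuous_const) fun γ₀ => ?_
      show act γ₀ φ₀ 1 = 0
      rw [hact, one_mul, sub_self]
    refine integral_eq_zero_of_ae ?_
    filter_upwards [hz] with ψ h
    exact h
  have hFsym3D : ∀ γ : Γ, |Fv ν γ + Fv ν γ⁻¹| ≤ 3 * D := by
    intro γ
    have hae : ∀ᵐ ψ ∂ν, |ψ γ + ψ γ⁻¹| ≤ 3 * D := by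
      refine horb _ (isClosed_le ((continuous_apply γ).add (continuous_apply γ⁻¹)).abs
        continuous_const) fun γ₀ => ?_
      show |act γ₀ φ₀ γ + act γ₀ φ₀ γ⁻¹| ≤ 3 * D
      rw [hact, hact]
      have h3 := hD γ γ⁻¹
      rw [mul_inv_cancel, hφ₀e] at h3
      obtain ⟨h1a, h1b⟩ := abs_le.mp (hD γ γ₀)
      obtain ⟨h2a, h2b⟩ := abs_le.mp (hD γ⁻¹ γ₀)
      obtain ⟨h3a, h3b⟩ := abs_le.mp h3
      rw [abs_le]
      constructor <;> linarith
    have heq : Fv ν γ + Fv ν γ⁻¹ = ∫ ψ, (ψ γ + ψ γ⁻¹) ∂ν :=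
      (integral_add (hint γ) (hint γ⁻¹)).symm
    rw [heq]
    have h := norm_integral_le_of_norm_le_const (μ := ν)
      (f := fun ψ : Γ → ℝ => ψ γ + ψ γ⁻¹) (C := 3 * D) ?_
    · simpa using h
    · filter_upwards [hae] with ψ h
      rwa [Real.norm_eq_abs]
  have hactmeas : ∀ γ : Γ, Measurable (act γ) := by
    intro γ
    have h : act γ = fun ψ => fun γ' => ψ (γ' * γ) - ψ γ := by
      funext ψ γ'; exact hact γ ψ γ'
    rw [h]
    exact measurable_pi_lambda _ fun γ' =>
      (measurable_pi_apply _).sub (measurable_pi_apply _)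
  have hstatF : ∀ γ' : Γ, Fv ν γ' = ∑' γ : Γ, p γ * (Fv ν (γ' * γ) - Fv ν γ) := by
    intro γ'
    have hintsum : Integrable (fun ψ : Γ → ℝ => ψ γ')
        (Measure.sum fun γ : Γ => ENNReal.ofReal (p γ) • Measure.map (act γ) ν) := by
      rw [hstat]; exact hint γ'
    calc Fv ν γ' = ∫ ψ, ψ γ'
        ∂(Measure.sum fun γ : Γ => ENNReal.ofReal (p γ) • Measure.map (act γ) ν) := by
          rw [hstat]; rfl
    _ = ∑' γ : Γ, ∫ ψ, ψ γ' ∂(ENNReal.ofReal (p γ) • Measure.map (act γ) ν) :=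
        integral_sum_measure hintsum
    _ = ∑' γ : Γ, p γ * (Fv ν (γ' * γ) - Fv ν γ) := by
        refine tsum_congr fun γ => ?_
        rw [integral_smul_measure, ENNReal.toReal_ofReal (hp0 γ),
          integral_map (hactmeas γ).aemeasurable (hmeas γ').aestronglyMeasurable]
        have h : (fun ψ : Γ → ℝ => act γ ψ γ') = fun ψ => ψ (γ' * γ) - ψ γ := by
          funext ψ; exact hact γ ψ γ'
        rw [h, integral_sub (hint _) (hint _), smul_eq_mul]
        rfl
  -- summability helpers
  have hsum_p : ∀ X : Γ → ℝ, Summable fun γ => p γ * X γ := by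
    intro X
    refine summable_fin (Set.Finite.subset hpfin ?_)
    intro γ h
    simp only [Function.mem_support] at h ⊢
    exact fun h' => h (by simp [h'])
  have hsum_P : ∀ (n : ℕ) (X : Γ → ℝ), Summable fun γ => convPow p n γ * X γ := by
    intro n X
    refine summable_fin (Set.Finite.subset (convPow_supp hpfin n) ?_)
    intro γ h
    simp only [Function.mem_support] at h ⊢
    exact fun h' => h (by simp [h'])
  have hℓ1 : ℓ 1 = ∑' γ, p γ * Fv ν γ := by rw [hℓF 1, convPow_one]
  have hSid : ∀ γ' : Γ, ∑' γ, p γ * Fv ν (γ' * γ) = Fv ν γ' + ℓ 1 := by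
    intro γ'
    have h := hstatF γ'
    have hsub : ∀ γ : Γ, p γ * (Fv ν (γ' * γ) - Fv ν γ)
        = p γ * Fv ν (γ' * γ) - p γ * Fv ν γ := fun γ => mul_sub _ _ _
    rw [tsum_congr hsub, Summable.tsum_sub (hsum_p _) (hsum_p _)] at h
    rw [hℓ1]
    linarith
  -- the main induction
  have hK : ∀ n : ℕ, (∀ γ' : Γ, ∑' γ, convPow p n γ * Fv ν (γ' * γ) = Fv ν γ' + ℓ n)
      ∧ ℓ n = n * ℓ 1 := by
    intro n
    induction n with
    | zero =>
      have hz : ∀ (γ' : Γ), ∑' γ, convPow p 0 γ * Fv ν (γ' * γ) = Fv ν γ' := by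
        intro γ'
        rw [tsum_eq_single (1 : Γ) ?_]
        · show convPow p 0 1 * Fv ν (γ' * 1) = Fv ν γ'
          simp [convPow]
        · intro b hb
          rw [show convPow p 0 b = 0 from if_neg hb, zero_mul]
      have hℓ0 : ℓ 0 = 0 := by
        have h := hz 1
        simp only [one_mul] at h
        rw [hℓF 0, h, hF1]
      exact ⟨fun γ' => by rw [hz γ', hℓ0, add_zero], by simp [hℓ0]⟩
    | succ n ih =>
      have key : ∀ γ' : Γ, ∑' γ, convPow p (n + 1) γ * Fv ν (γ' * γ)
          = Fv ν γ' + ℓ 1 + ℓ n := by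
        intro γ'
        show ∑' γ, (∑' a, p a * convPow p n (a⁻¹ * γ)) * Fv ν (γ' * γ) = _
        have step1 : ∀ γ : Γ, (∑' a, p a * convPow p n (a⁻¹ * γ)) * Fv ν (γ' * γ)
            = ∑' a, p a * convPow p n (a⁻¹ * γ) * Fv ν (γ' * γ) :=
          fun γ => tsum_mul_right.symm
        rw [tsum_congr step1]
        have hfin2 : (Function.support fun z : Γ × Γ =>
            (fun γ a => p a * convPow p n (a⁻¹ * γ) * Fv ν (γ' * γ)) z.1 z.2).Finite := by
          refine fin_pair hpfin (convPow_supp hpfin n)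
            (fun γ a => p a * convPow p n (a⁻¹ * γ) * Fv ν (γ' * γ)) fun γ a h => ?_
          refine ⟨fun h' => h ?_, fun h' => h ?_⟩ <;> simp [h']
        rw [tsum_tsum_comm hfin2]
        have inner : ∀ a : Γ, ∑' γ, p a * convPow p n (a⁻¹ * γ) * Fv ν (γ' * γ)
            = p a * (Fv ν (γ' * a) + ℓ n) := by
          intro a
          have e1 : ∀ γ : Γ, p a * convPow p n (a⁻¹ * γ) * Fv ν (γ' * γ)
              = p a * (convPow p n (a⁻¹ * γ) * Fv ν (γ' * γ)) := fun γ => mul_assoc _ _ _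
          rw [tsum_congr e1, tsum_mul_left]
          congr 1
          have h := ((Equiv.mulLeft a).tsum_eq
            fun γ => convPow p n (a⁻¹ * γ) * Fv ν (γ' * γ))
          simp only [Equiv.coe_mulLeft, inv_mul_cancel_left] at h
          rw [← h]
          have e2 : ∀ b : Γ, convPow p n b * Fv ν (γ' * (a * b))
              = convPow p n b * Fv ν (γ' * a * b) := by
            intro b; rw [mul_assoc]
          rw [tsum_congr e2, (ih.1 (γ' * a))]
        rw [tsum_congr inner]
        have e3 : ∀ a : Γ, p a * (Fv ν (γ' * a) + ℓ n)
            = p a * Fv ν (γ' * a) + p a * ℓ n := fun a => mul_add _ _ _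
        rw [tsum_congr e3, Summable.tsum_add (hsum_p _) (hsum_p fun _ => ℓ n), hSid γ',
          tsum_mul_right, hp1, one_mul]
      have hℓsucc : ℓ (n + 1) = ℓ 1 + ℓ n := by
        have h := key 1
        simp only [one_mul] at h
        rw [hF1, zero_add] at h
        rw [hℓF (n + 1), h]
      refine ⟨fun γ' => ?_, ?_⟩
      · rw [key γ', hℓsucc]; ring
      · rw [hℓsucc, ih.2]; push_cast; ring
  -- boundedness
  have hbnd : ∀ n : ℕ, |ℓ n| ≤ 3 * D / 2 := by
    intro n
    have h1 : ∑' γ, convPow p n γ * Fv ν γ⁻¹ = ℓ n := by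
      rw [← (Equiv.inv Γ).tsum_eq fun γ => convPow p n γ * Fv ν γ⁻¹]
      simp only [Equiv.inv_apply, inv_inv]
      rw [hℓF n]
      exact tsum_congr fun γ => by rw [convPow_symm hpfin hpsymm n γ]
    have h2 : 2 * ℓ n = ∑' γ, convPow p n γ * (Fv ν γ + Fv ν γ⁻¹) := by
      have e : ∀ γ : Γ, convPow p n γ * (Fv ν γ + Fv ν γ⁻¹)
          = convPow p n γ * Fv ν γ + convPow p n γ * Fv ν γ⁻¹ := fun γ => mul_add _ _ _
      rw [tsum_congr e, Summable.tsum_add (hsum_P n _) (hsum_P n _), h1, ← hℓF n]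
      ring
    have hsum_P' : ∀ X : Γ → ℝ, Summable fun γ => ‖convPow p n γ * X γ‖ := by
      intro X
      refine summable_fin (Set.Finite.subset (convPow_supp hpfin n) ?_)
      intro γ h
      simp only [Function.mem_support] at h ⊢
      exact fun h' => h (by simp [h'])
    have h3 : |∑' γ, convPow p n γ * (Fv ν γ + Fv ν γ⁻¹)| ≤ 3 * D := by
      rw [← Real.norm_eq_abs]
      have hb1 : ‖∑' γ, convPow p n γ * (Fv ν γ + Fv ν γ⁻¹)‖
          ≤ ∑' γ, ‖convPow p n γ * (Fv ν γ + Fv ν γ⁻¹)‖ :=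
        norm_tsum_le_tsum_norm (hsum_P' _)
      have hb2 : ∑' γ, ‖convPow p n γ * (Fv ν γ + Fv ν γ⁻¹)‖
          ≤ ∑' γ, convPow p n γ * (3 * D) := by
        refine Summable.tsum_le_tsum (fun γ => ?_) (hsum_P' _) (hsum_P n _)
        rw [norm_mul, Real.norm_eq_abs, Real.norm_eq_abs,
          abs_of_nonneg (convPow_nonneg hp0 n γ)]
        exact mul_le_mul_of_nonneg_left (hFsym3D γ) (convPow_nonneg hp0 n γ)
      have hb3 : ∑' γ, convPow p n γ * (3 * D) = 3 * D := by
        rw [tsum_mul_right, convPow_mass hpfin hp1 n, one_mul]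
      linarith
    rw [← h2] at h3
    rw [abs_mul] at h3
    have : |(2:ℝ)| = 2 := by norm_num
    rw [this] at h3
    linarith [abs_nonneg (ℓ n)]
  -- ℓ 1 = 0
  have hl10 : ℓ 1 = 0 := by
    by_contra h
    have hpos : 0 < |ℓ 1| := abs_pos.mpr h
    obtain ⟨n, hn⟩ := exists_nat_gt ((3 * D / 2) / |ℓ 1|)
    have h1 : 3 * D / 2 < n * |ℓ 1| := (div_lt_iff₀ hpos).mp hn
    have h2 : |ℓ n| = n * |ℓ 1| := by
      rw [(hK n).2, abs_mul, abs_of_nonneg (by positivity : (0:ℝ) ≤ (n:ℝ))]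
    linarith [hbnd n, h2 ▸ h1]
  refine ⟨?_, fun n _ => (hK n).2, ⟨3 * D / 2, fun n _ => hbnd n⟩, hl10⟩
  intro m n hm hn
  rw [(hK (m + n)).2, (hK m).2, (hK n).2]
  push_cast
  ring
end

section
/- Let P₀ ⊆ ℝ be an approximate subgroup (symmetric, 0 ∈ P₀, and P₀ + P₀ ⊆ P₀ + F for some finite F ⊆ ℝ) and let φ₀ : Γ → ℝ be an antisymmetric quasimorphism with finite defect set 𝒟(φ₀) = {φ₀(gh) - φ₀(g) - φ₀(h)}. Then the twisted set P₀(φ₀) = {(γ,t) ∈ Γ × ℝ : φ₀(γ) + t ∈ P₀} is an approximate subgroup of Γ × ℝ; concretely, P₀(φ₀)·P₀(φ₀) ⊆ P₀(φ₀)·({e} × (F + 𝒟(φ₀))). -/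
open Pointwise

/-- Twisting an approximate subgroup `P₀ ⊆ ℝ` by an antisymmetric quasimorphism
`φ₀` with finite defect set yields an approximate subgroup
`P₀(φ₀) = {(γ,t) : φ₀(γ) + t ∈ P₀}` of `Γ × ℝ`; concretely
`P₀(φ₀)·P₀(φ₀) ⊆ P₀(φ₀)·({e} × (F + 𝒟(φ₀)))`. -/
theorem stmt10 {Γ : Type*} [Group Γ]
    (P₀ : Set ℝ) (hP0 : (0 : ℝ) ∈ P₀) (hPsymm : ∀ x ∈ P₀, -x ∈ P₀)
    (F : Set ℝ) (hF : F.Finite) (hPF : P₀ + P₀ ⊆ P₀ + F)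
    (φ₀ : Γ → ℝ) (hanti : ∀ γ : Γ, φ₀ γ⁻¹ = -φ₀ γ)
    (hdef : {d : ℝ | ∃ g h : Γ, d = φ₀ (g * h) - φ₀ g - φ₀ h}.Finite)
    (T : Set (Γ × ℝ)) (hT : T = {x : Γ × ℝ | φ₀ x.1 + x.2 ∈ P₀}) :
    ((1 : Γ), (0 : ℝ)) ∈ T ∧
    (∀ x ∈ T, ((x.1⁻¹, -x.2) : Γ × ℝ) ∈ T) ∧
    (∀ x ∈ T, ∀ y ∈ T, ∃ z ∈ T, ∃ f ∈ F,
      ∃ d ∈ {d : ℝ | ∃ g h : Γ, d = φ₀ (g * h) - φ₀ g - φ₀ h},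
        x.1 * y.1 = z.1 ∧ x.2 + y.2 = z.2 + (f + d)) := by
  subst hT
  have hφ1 : φ₀ 1 = 0 := by have := hanti 1; simp at this; linarith
  refine ⟨by simp [hφ1, hP0], fun x hx => by
    simpa [hanti, neg_add_rev] using (by
      have := hPsymm _ hx
      simpa [neg_add, add_comm] using this), ?_⟩
  intro x hx y hy
  have hsum : (φ₀ x.1 + x.2) + (φ₀ y.1 + y.2) ∈ P₀ + F :=
    hPF (Set.add_mem_add hx hy)
  obtain ⟨p, hp, f, hf, hpf⟩ := hsum
  have hpf' : p + f = φ₀ x.1 + x.2 + (φ₀ y.1 + y.2) := hpf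
  set d := φ₀ (x.1 * y.1) - φ₀ x.1 - φ₀ y.1 with hd
  refine ⟨(x.1 * y.1, x.2 + y.2 - (f + d)), ?_, f, hf, d, ⟨x.1, y.1, rfl⟩, rfl, by ring⟩
  show φ₀ (x.1 * y.1) + (x.2 + y.2 - (f + d)) ∈ P₀
  have : φ₀ (x.1 * y.1) + (x.2 + y.2 - (f + d)) = p := by rw [hd]; linarith
  rw [this]; exact hp
end

section
/- Let Δ be a compact Γ-space, c : Γ × Δ → ℝ a continuous normalized cocycle, P₀ ⊆ ℝ closed, and Ω_{P₀} the ℝ-orbit closure of P₀ in the Chabauty–Fell space of closed subsets of ℝ. Then the map π : Δ × Ω_{P₀} → 𝒞(Γ × ℝ), π(y,P) = {(γ,t) : c(γ,y) + t ∈ P}, is continuous with respect to the Chabauty–Fell topology and equivariant for the skew-product action (γ,t).(y,P) = (γ.y, P - t - c(γ,y)). -/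
open Filter Topology

/-- Chabauty–Fell convergence of a sequence of subsets of a topological space,
via the conditions (CF1) and (CF2). -/
def CFTendsto {X : Type*} [TopologicalSpace X] (P : ℕ → Set X) (Q : Set X) : Prop :=
  (∀ φ : ℕ → ℕ, StrictMono φ → ∀ x : ℕ → X, (∀ k, x k ∈ P (φ k)) →
    ∀ l : X, Tendsto x atTop (𝓝 l) → l ∈ Q) ∧
  (∀ q ∈ Q, ∃ x : ℕ → X, (∀ n, x n ∈ P n) ∧ Tendsto x atTop (𝓝 q))

/-- Membership in the Chabauty–Fell closure `Ω_{P₀}` of the `ℝ`-orbit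
(by translations) of a closed set `P₀ ⊆ ℝ`. -/
def OmegaMem (P₀ Q : Set ℝ) : Prop :=
  ∃ s : ℕ → ℝ, CFTendsto (fun n => (fun x => x - s n) '' P₀) Q

/-- The map `π(y,P) = {(γ,t) : c(γ,y) + t ∈ P}` on `Δ × Ω_{P₀}` is equivariant
for the skew-product action `(γ,t).(y,P) = (γ.y, P - t - c(γ,y))` and
(sequentially) continuous for the Chabauty–Fell topology. -/
theorem stmt16 {Γ Δ : Type*} [Group Γ] [Countable Γ]
    [TopologicalSpace Γ] [DiscreteTopology Γ]
    [TopologicalSpace Δ] [CompactSpace Δ]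
    (a : Γ → Δ → Δ) (ha1 : ∀ y, a 1 y = y)
    (hamul : ∀ γ₁ γ₂ y, a (γ₁ * γ₂) y = a γ₁ (a γ₂ y))
    (hacont : ∀ γ, Continuous (a γ))
    (c : Γ → Δ → ℝ) (hccont : ∀ γ, Continuous (c γ))
    (hcocycle : ∀ γ₁ γ₂ y, c (γ₁ * γ₂) y = c γ₁ (a γ₂ y) + c γ₂ y)
    (hnorm : ∀ y, c 1 y = 0)
    (P₀ : Set ℝ) (hP₀ : IsClosed P₀)
    (π : Δ → Set ℝ → Set (Γ × ℝ))
    (hπ : ∀ y P, π y P = {gt : Γ × ℝ | c gt.1 y + gt.2 ∈ P}) :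
    (∀ (γ : Γ) (t : ℝ) (y : Δ) (P : Set ℝ),
      π (a γ y) ((fun x => x - (t + c γ y)) '' P) =
        (fun z : Γ × ℝ => (z.1 * γ⁻¹, z.2 - t)) '' π y P) ∧
    (∀ (y : ℕ → Δ) (yl : Δ) (P : ℕ → Set ℝ) (Pl : Set ℝ),
      (∀ n, OmegaMem P₀ (P n)) → OmegaMem P₀ Pl →
      Tendsto y atTop (𝓝 yl) → CFTendsto P Pl →
      CFTendsto (fun n => π (y n) (P n)) (π yl Pl)) := by
  constructor
  · intro γ t y P
    ext ⟨g, s⟩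
    simp only [hπ, Set.mem_setOf_eq, Set.mem_image, Prod.mk.injEq, Prod.exists]
    constructor
    · rintro ⟨x, hx, hxe⟩
      refine ⟨g * γ, s + t, ?_, by group, by ring⟩
      simp only [hπ, Set.mem_setOf_eq, hcocycle g γ y]
      have : c g (a γ y) + c γ y + (s + t) = x := by linarith [hxe]
      rwa [this]
    · rintro ⟨g', s', hmem, hg, hs⟩
      refine ⟨c g' y + s', hmem, ?_⟩
      have hg' : g' = g * γ := by rw [← hg]; group
      subst hg'
      rw [hcocycle g γ y]
      have hs' : s' = s + t := by linarith [hs]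
      subst hs'
      ring
  · intro y yl P Pl _ _ hy hCF
    constructor
    · intro φ hφ x hx l hl
      have hx1 : Tendsto (fun k => (x k).1) atTop (𝓝 l.1) :=
        (continuous_fst.tendsto l).comp hl
      have hx2 : Tendsto (fun k => (x k).2) atTop (𝓝 l.2) :=
        (continuous_snd.tendsto l).comp hl
      have hev : ∀ᶠ k in atTop, (x k).1 = l.1 := by
        have := hx1 (IsOpen.mem_nhds (isOpen_discrete {l.1}) rfl)
        simpa using this
      obtain ⟨N, hN⟩ := eventually_atTop.mp hev
      have hmono : StrictMono (fun k : ℕ => N + k) := fun a b h => Nat.add_lt_add_left h N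
      have hψ : StrictMono (fun k => φ (N + k)) := hφ.comp hmono
      have hshift : Tendsto (fun k : ℕ => N + k) atTop atTop :=
        hmono.tendsto_atTop
      have hmem : ∀ k, c l.1 (y (φ (N + k))) + (x (N + k)).2 ∈ P (φ (N + k)) := by
        intro k
        have h := hx (N + k)
        simp only [hπ, Set.mem_setOf_eq] at h
        rw [← hN (N + k) (by omega)]
        exact h
      have htend : Tendsto (fun k => c l.1 (y (φ (N + k))) + (x (N + k)).2)
          atTop (𝓝 (c l.1 yl + l.2)) :=
        Tendsto.add
          (((hccont l.1).tendsto yl).comp (hy.comp hψ.tendsto_atTop))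
          (hx2.comp hshift)
      have := hCF.1 (fun k => φ (N + k)) hψ _ hmem _ htend
      rw [hπ]
      exact this
    · intro q hq
      rw [hπ] at hq
      obtain ⟨x, hxmem, hxt⟩ := hCF.2 _ hq
      refine ⟨fun n => (q.1, x n - c q.1 (y n)), ?_, ?_⟩
      · intro n
        show (q.1, x n - c q.1 (y n)) ∈ π (y n) (P n)
        rw [hπ]
        simpa using hxmem n
      · have h2 : Tendsto (fun n => x n - c q.1 (y n)) atTop (𝓝 q.2) := by
          have := hxt.sub (((hccont q.1).tendsto yl).comp hy)
          have he : c q.1 yl + q.2 - c q.1 yl = q.2 := by ring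
          rwa [he] at this
        exact Tendsto.prodMk_nhds (tendsto_const_nhds : Tendsto (fun _ : ℕ => q.1) atTop (𝓝 q.1)) h2
end

section
/- In the setting of the previous statement, assume additionally that the ℝ-action on Ω_{P₀} (by translation P ↦ P - t) is free. Then for all (y,P), (y',P') ∈ Δ × Ω_{P₀}: π(y,P) = π(y',P') if and only if P = P' and c(γ,y) = c(γ,y') for all γ ∈ Γ. -/
open Filter Topology

/-- If the translation action of `ℝ` on `Ω_{P₀}` is free, then
`π(y,P) = π(y',P')` if and only if `P = P'` and `c(·,y) = c(·,y')`. -/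
theorem stmt17 {Γ Δ : Type*} [Group Γ] [Countable Γ]
    [TopologicalSpace Γ] [DiscreteTopology Γ]
    [TopologicalSpace Δ] [CompactSpace Δ]
    (a : Γ → Δ → Δ) (ha1 : ∀ y, a 1 y = y)
    (hamul : ∀ γ₁ γ₂ y, a (γ₁ * γ₂) y = a γ₁ (a γ₂ y))
    (hacont : ∀ γ, Continuous (a γ))
    (c : Γ → Δ → ℝ) (hccont : ∀ γ, Continuous (c γ))
    (hcocycle : ∀ γ₁ γ₂ y, c (γ₁ * γ₂) y = c γ₁ (a γ₂ y) + c γ₂ y)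
    (hnorm : ∀ y, c 1 y = 0)
    (P₀ : Set ℝ) (hP₀ : IsClosed P₀)
    (hfree : ∀ Q : Set ℝ, OmegaMem P₀ Q →
      ∀ t : ℝ, (fun x => x - t) '' Q = Q → t = 0)
    (π : Δ → Set ℝ → Set (Γ × ℝ))
    (hπ : ∀ y P, π y P = {gt : Γ × ℝ | c gt.1 y + gt.2 ∈ P}) :
    ∀ (y y' : Δ) (P P' : Set ℝ), OmegaMem P₀ P → OmegaMem P₀ P' →
      (π y P = π y' P' ↔ P = P' ∧ ∀ γ : Γ, c γ y = c γ y') := by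
  intro y y' P P' hP hP'
  constructor
  · intro heq
    have key : ∀ γ : Γ, ∀ t : ℝ, c γ y + t ∈ P ↔ c γ y' + t ∈ P' := by
      intro γ t
      have := Set.ext_iff.mp (hπ y P ▸ hπ y' P' ▸ heq) (γ, t)
      simpa using this
    have hPP' : P = P' := by
      ext x
      have := key 1 x
      simpa [hnorm] using this
    subst hPP'
    refine ⟨rfl, fun γ => ?_⟩
    have him : (fun x => x - (c γ y - c γ y')) '' P = P := by
      ext z
      constructor
      · rintro ⟨x, hx, rfl⟩
        have h2 := (key γ (x - c γ y)).mp (by simpa using hx)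
        have : x - (c γ y - c γ y') = c γ y' + (x - c γ y) := by ring
        simpa [this] using h2
      · intro hz
        refine ⟨z + (c γ y - c γ y'), ?_, by ring⟩
        have := (key γ (z - c γ y')).mpr (by simpa using hz)
        convert this using 1
        ring
    have := hfree P hP _ him
    linarith
  · rintro ⟨rfl, hc⟩
    rw [hπ, hπ]
    ext ⟨γ, t⟩
    simp [hc γ]
end
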